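/- Let A, B, L be K×K complex matrices, T ≥ 0 a real number, and define the superoperators 𝓛_A(ρ) = Aρ − ρA + T·(L ρ L† − (1/2) L†L ρ − (1/2) ρ L†L) and 𝓛_B(ρ) = Bρ − ρB on K×K complex matrices. Given a K×K matrix ρ₀, define superoperators Q_n by Q₀ = I, Q₁ = 𝓛_A, Q_{n+1} = 𝓛_A ∘ Q_n + n 𝓛_B ∘ Q_{n-1} for n ≥ 1, and set ρ_n = (1/n!) Q_n(ρ₀). Then the series Σ_{n≥0} ρ_n sⁿ converges absolutely for every s ∈ ℂ (with respect to the Hilbert–Schmidt norm), and the function ρ(s) = Σ_{n≥0} ρ_n sⁿ defined for real s is differentiable and satisfies dρ/ds = 𝓛_A(ρ(s)) + s·𝓛_B(ρ(s)) with ρ(0) = ρ₀. -/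

import Mathlib

open Matrix

attribute [local instance] Matrix.frobeniusSeminormedAddCommGroup
  Matrix.frobeniusNormedAddCommGroup Matrix.frobeniusNormedSpace

/-- The Lindbladian superoperator `𝓛_A(ρ) = [A, ρ] + T (L ρ L† − ½ L†L ρ − ½ ρ L†L)`. -/
noncomputable def lindbladA {K : ℕ} (A L : Matrix (Fin K) (Fin K) ℂ) (T : ℝ) :
    Matrix (Fin K) (Fin K) ℂ →ₗ[ℂ] Matrix (Fin K) (Fin K) ℂ :=
  LinearMap.mulLeft ℂ A - LinearMap.mulRight ℂ A +
    (T : ℂ) • ((LinearMap.mulRight ℂ Lᴴ).comp (LinearMap.mulLeft ℂ L)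
      - (2 : ℂ)⁻¹ • LinearMap.mulLeft ℂ (Lᴴ * L)
      - (2 : ℂ)⁻¹ • LinearMap.mulRight ℂ (Lᴴ * L))

/-- The commutator superoperator `𝓛_B(ρ) = [B, ρ]`. -/
noncomputable def lindbladB {K : ℕ} (B : Matrix (Fin K) (Fin K) ℂ) :
    Matrix (Fin K) (Fin K) ℂ →ₗ[ℂ] Matrix (Fin K) (Fin K) ℂ :=
  LinearMap.mulLeft ℂ B - LinearMap.mulRight ℂ B

/-!
The coefficient equations of `ρ' = (𝓛_A + s 𝓛_B) ρ` are `ρ₁ = 𝓛_A ρ₀` and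
`(n + 2) ρₙ₊₂ = 𝓛_A ρₙ₊₁ + 𝓛_B ρₙ`, and the recursion for `Qₙ` is exactly these equations
multiplied by `n!`. The growing factor `n + 2` forces `‖ρₙ‖ ≤ ‖ρ₀‖ Cⁿ / √(n!)` with
`C = ‖𝓛_A‖ + ‖𝓛_B‖ + 1`, so the series is entire and may be differentiated term by term; the
coefficient equations then turn the differentiated series back into `𝓛_A ρ + s 𝓛_B ρ`.
-/

open Nat

theorem summable_pow_div_sqrt_factorial (q : ℝ) :
    Summable fun n : ℕ => q ^ n / √(n ! : ℝ) := by
  -- AM-GM: `|q|ⁿ / √(n!) = √((4q²)ⁿ / n!) · √((1/4)ⁿ)`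
  have hbound (n : ℕ) : ‖q ^ n / √(n ! : ℝ)‖ ≤ ((4 * q ^ 2) ^ n / n ! + (1 / 4) ^ n) / 2 := by
    have hfac : (0 : ℝ) < n ! := by positivity
    set x := (2 * |q|) ^ n / √(n ! : ℝ)
    set y := (1 / 2 : ℝ) ^ n
    have hxy : x * y = |q| ^ n / √(n ! : ℝ) := by rw [div_mul_eq_mul_div, ← mul_pow]; ring_nf
    have hx : x ^ 2 = (4 * q ^ 2) ^ n / n ! := by
      rw [div_pow, Real.sq_sqrt hfac.le, ← pow_mul, mul_comm n, pow_mul, mul_pow, sq_abs]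
      norm_num
    have hy : y ^ 2 = (1 / 4) ^ n := by rw [← pow_mul, mul_comm n, pow_mul]; norm_num
    rw [norm_div, norm_pow, Real.norm_eq_abs, Real.norm_of_nonneg (Real.sqrt_nonneg _), ← hxy,
      ← hx, ← hy]
    linarith [two_mul_le_add_sq x y]
  exact .of_norm_bounded
    (((Real.summable_pow_div_factorial _).add (summable_geometric_of_lt_one (by norm_num)
      (by norm_num))).div_const 2) hbound

theorem sqrt_factorial_succ (n : ℕ) : √((n + 1)! : ℝ) = √(n + 1 : ℝ) * √(n ! : ℝ) := by
  rw [factorial_succ, cast_mul, Real.sqrt_mul (by positivity), cast_succ]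

theorem le_mul_pow_div_sqrt_factorial {r : ℕ → ℝ} {a b M : ℝ} (ha : 0 ≤ a) (hb : 0 ≤ b)
    (hM : 0 ≤ M) (h0 : r 0 ≤ M) (h1 : r 1 ≤ a * M)
    (hrec : ∀ n : ℕ, (n + 2) * r (n + 2) ≤ a * r (n + 1) + b * r n) (n : ℕ) :
    r n ≤ M * (a + b + 1) ^ n / √(n ! : ℝ) := by
  set C := a + b + 1
  have hC : 1 ≤ C := by linarith
  induction n using Nat.twoStepInduction with
  | zero => simpa using h0
  | one => simpa using h1.trans (by nlinarith)
  | more n ih₀ ih₁ =>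
    rw [sqrt_factorial_succ] at ih₁
    rw [show (n + 2)! = (n + 1 + 1)! from rfl, sqrt_factorial_succ, sqrt_factorial_succ,
      show ((n + 1 : ℕ) : ℝ) + 1 = n + 2 by push_cast; ring]
    set s := √(n ! : ℝ)
    set t₁ := √(n + 1 : ℝ)
    set t₂ := √(n + 2 : ℝ)
    have hs : 0 < s := Real.sqrt_pos.2 (by positivity)
    have ht₁ : 1 ≤ t₁ := Real.one_le_sqrt.2 (by linarith [n.cast_nonneg (α := ℝ)])
    have ht₂ : t₁ ≤ t₂ := Real.sqrt_le_sqrt (by linarith)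
    have hsq : t₂ ^ 2 = n + 2 := Real.sq_sqrt (by positivity)
    have hkey : a * C + b * t₁ ≤ C ^ 2 * t₂ := calc
      a * C + b * t₁ ≤ a * C * t₁ + b * t₁ * C :=
        add_le_add (le_mul_of_one_le_right (by positivity) ht₁)
          (le_mul_of_one_le_right (by positivity) hC)
      _ = (a + b) * C * t₁ := by ring
      _ ≤ C ^ 2 * t₂ := by rw [sq]; gcongr; linarith
    calc r (n + 2) = (n + 2) * r (n + 2) / t₂ ^ 2 := by rw [hsq]; field_simp
      _ ≤ (a * (M * C ^ (n + 1) / (t₁ * s)) + b * (M * C ^ n / s)) / t₂ ^ 2 := by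
        gcongr; exact (hrec n).trans (by gcongr)
      _ = M * C ^ n * (a * C + b * t₁) / (t₂ ^ 2 * (t₁ * s)) := by field_simp; ring
      _ ≤ M * C ^ n * (C ^ 2 * t₂) / (t₂ ^ 2 * (t₁ * s)) := by gcongr
      _ = M * C ^ (n + 2) / (t₂ * (t₁ * s)) := by field_simp; ring

section PowerSeries

variable {E : Type*} [NormedAddCommGroup E] [NormedSpace ℂ E]

theorem summable_pow_smul [CompleteSpace E] {c : ℕ → E}
    (hc : ∀ s : ℂ, Summable fun n => ‖c n‖ * ‖s‖ ^ n) (z : ℂ) :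
    Summable fun n => z ^ n • c n :=
  .of_norm_bounded (hc z) fun n => by rw [norm_smul, norm_pow, mul_comm]

theorem hasDerivAt_tsum_pow_smul [CompleteSpace E] {c : ℕ → E}
    (hc : ∀ s : ℂ, Summable fun n => ‖c n‖ * ‖s‖ ^ n) (z : ℂ) :
    HasDerivAt (fun w : ℂ => ∑' n, w ^ n • c n) (∑' n : ℕ, ((n : ℂ) * z ^ (n - 1)) • c n) z := by
  set R := ‖z‖ + 1
  have hR : 1 ≤ R := by simp [R]
  have hbound (n : ℕ) (w : ℂ) (hw : w ∈ Metric.ball 0 R) :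
      ‖(n * w ^ (n - 1) : ℂ) • c n‖ ≤ ‖c n‖ * ‖(2 * R : ℂ)‖ ^ n := by
    have hwR : ‖w‖ ≤ R := (mem_ball_zero_iff.1 hw).le
    rw [norm_smul, norm_mul, norm_pow, Complex.norm_natCast, mul_comm]
    have : (n : ℝ) * ‖w‖ ^ (n - 1) ≤ ‖(2 * R : ℂ)‖ ^ n := calc
      (n : ℝ) * ‖w‖ ^ (n - 1) ≤ 2 ^ n * R ^ n := by
        gcongr
        · exact_mod_cast n.lt_two_pow_self.le
        · exact (pow_le_pow_left₀ (norm_nonneg w) hwR _).trans (pow_le_pow_right₀ hR (by omega))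
      _ = ‖(2 * R : ℂ)‖ ^ n := by
        rw [← mul_pow]; norm_cast; rw [Real.norm_of_nonneg (by positivity)]
    gcongr
  exact hasDerivAt_tsum_of_isPreconnected (g := fun n w => w ^ n • c n)
    (g' := fun n w => ((n : ℂ) * w ^ (n - 1)) • c n) (hc _) Metric.isOpen_ball
    (convex_ball 0 R).isPreconnected
    (fun n w _ => (hasDerivAt_pow n w).smul_const (c n)) hbound
    (Metric.mem_ball_self (by positivity)) (summable_pow_smul hc 0)
    (mem_ball_zero_iff.2 (by simp [R]))

end PowerSeries

/-- The coefficient equations of a power series solution `∑ zⁿ cₙ` of `y' = (LA + z LB) y`. -/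
structure IsSeriesSolution {E : Type*} [AddCommMonoid E] [Module ℂ E] (LA LB : E → E)
    (c : ℕ → E) : Prop where
  one : c 1 = LA (c 0)
  add_two : ∀ n : ℕ, ((n : ℂ) + 2) • c (n + 2) = LA (c (n + 1)) + LB (c n)

theorem isSeriesSolution_factorial_inv_smul {E : Type*} [AddCommGroup E] [Module ℂ E]
    (LA LB : E →ₗ[ℂ] E) (Q : ℕ → E →ₗ[ℂ] E) (x : E) (hQ0 : Q 0 = LinearMap.id) (hQ1 : Q 1 = LA)
    (hQrec : ∀ n : ℕ, 1 ≤ n → Q (n + 1) = LA ∘ₗ Q n + (n : ℂ) • (LB ∘ₗ Q (n - 1))) :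
    IsSeriesSolution LA LB fun n => ((n ! : ℂ))⁻¹ • Q n x where
  one := by simp [hQ0, hQ1]
  add_two n := by
    have hQ : Q (n + 2) x = LA (Q (n + 1) x) + ((n : ℂ) + 1) • LB (Q n x) := by
      simp [hQrec (n + 1) le_add_self]
    have hn₁ : ((n : ℂ) + 1) ≠ 0 := by exact_mod_cast succ_ne_zero n
    have hn₂ : ((n : ℂ) + 2) ≠ 0 := by exact_mod_cast succ_ne_zero (n + 1)
    rw [hQ, map_smul, map_smul, factorial_succ, factorial_succ]
    push_cast
    rw [show (n : ℂ) + 1 + 1 = n + 2 by ring]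
    match_scalars <;> field_simp

namespace IsSeriesSolution

variable {E : Type*} [NormedAddCommGroup E] [NormedSpace ℂ E] {LA LB : E →L[ℂ] E} {c : ℕ → E}

theorem norm_le (hc : IsSeriesSolution LA LB c) (n : ℕ) :
    ‖c n‖ ≤ ‖c 0‖ * (‖LA‖ + ‖LB‖ + 1) ^ n / √(n ! : ℝ) := by
  refine le_mul_pow_div_sqrt_factorial (r := fun n => ‖c n‖) (norm_nonneg _) (norm_nonneg _)
    (norm_nonneg _) le_rfl (hc.one ▸ LA.le_opNorm _) (fun n => ?_) n
  have hnorm : ‖(n : ℂ) + 2‖ = n + 2 := by exact_mod_cast Complex.norm_natCast (n + 2)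
  rw [← hnorm, ← norm_smul, hc.add_two]
  exact (norm_add_le _ _).trans (add_le_add (LA.le_opNorm _) (LB.le_opNorm _))

theorem summable_norm_mul_pow (hc : IsSeriesSolution LA LB c) (s : ℂ) :
    Summable fun n => ‖c n‖ * ‖s‖ ^ n := by
  refine .of_nonneg_of_le (fun n => by positivity) (fun n => ?_)
    ((summable_pow_div_sqrt_factorial ((‖LA‖ + ‖LB‖ + 1) * ‖s‖)).mul_left ‖c 0‖)
  calc ‖c n‖ * ‖s‖ ^ n ≤ ‖c 0‖ * (‖LA‖ + ‖LB‖ + 1) ^ n / √(n ! : ℝ) * ‖s‖ ^ n := by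
        gcongr; exact hc.norm_le n
    _ = _ := by rw [mul_pow]; ring

variable [CompleteSpace E]

theorem hasSum_deriv (hc : IsSeriesSolution LA LB c) (z : ℂ) :
    HasSum (fun n : ℕ => ((n : ℂ) * z ^ (n - 1)) • c n)
      (LA (∑' n, z ^ n • c n) + z • LB (∑' n, z ^ n • c n)) := by
  have hsum := (summable_pow_smul hc.summable_norm_mul_pow z).hasSum
  have hA := (hasSum_nat_add_iff' 1).2 (hsum.mapL LA)
  have hB := (hsum.mapL LB).const_smul z
  rw [← hasSum_nat_add_iff' 2]
  convert hA.add hB using 1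
  · ext n
    simp only [map_smul, smul_smul]
    rw [show n + 2 - 1 = n + 1 from rfl, ← smul_smul, ← pow_succ' z n, ← smul_add,
      ← hc.add_two, smul_comm]
    push_cast; rfl
  · simp only [Finset.sum_range_succ, Finset.range_one, Finset.sum_singleton, CharP.cast_eq_zero,
      zero_tsub, pow_zero, mul_one, zero_smul, cast_one, tsub_self, hc.one, one_smul, zero_add,
      map_smul]
    abel

theorem hasDerivAt_tsum (hc : IsSeriesSolution LA LB c) (z : ℂ) :
    HasDerivAt (fun w : ℂ => ∑' n, w ^ n • c n)
      (LA (∑' n, z ^ n • c n) + z • LB (∑' n, z ^ n • c n)) z :=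
  (hc.hasSum_deriv z).tsum_eq ▸ hasDerivAt_tsum_pow_smul hc.summable_norm_mul_pow z

end IsSeriesSolution

theorem stmt_10_general {K : ℕ} (A B L : Matrix (Fin K) (Fin K) ℂ) (T : ℝ)
    (ρ₀ : Matrix (Fin K) (Fin K) ℂ)
    (Q : ℕ → (Matrix (Fin K) (Fin K) ℂ →ₗ[ℂ] Matrix (Fin K) (Fin K) ℂ))
    (hQ0 : Q 0 = LinearMap.id) (hQ1 : Q 1 = lindbladA A L T)
    (hQrec : ∀ n : ℕ, 1 ≤ n →
      Q (n + 1) = (lindbladA A L T) ∘ₗ Q n + (n : ℂ) • ((lindbladB B) ∘ₗ Q (n - 1)))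
    (ρ : ℕ → Matrix (Fin K) (Fin K) ℂ)
    (hρ : ∀ n : ℕ, ρ n = ((n.factorial : ℂ))⁻¹ • Q n ρ₀) :
    (∀ s : ℂ, Summable fun n : ℕ => ‖ρ n‖ * ‖s‖ ^ n) ∧
    (∀ f : ℝ → Matrix (Fin K) (Fin K) ℂ, f = (fun s : ℝ => ∑' n : ℕ, (s : ℂ) ^ n • ρ n) →
      f 0 = ρ₀ ∧
      ∀ s : ℝ, HasDerivAt f (lindbladA A L T (f s) + (s : ℂ) • lindbladB B (f s)) s) := by
  obtain rfl : ρ = fun n => ((n ! : ℂ))⁻¹ • Q n ρ₀ := funext hρ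
  have hsol : IsSeriesSolution (lindbladA A L T).toContinuousLinearMap
      (lindbladB B).toContinuousLinearMap fun n => ((n ! : ℂ))⁻¹ • Q n ρ₀ := by
    simpa using isSeriesSolution_factorial_inv_smul _ _ Q ρ₀ hQ0 hQ1 hQrec
  refine ⟨hsol.summable_norm_mul_pow, fun f hf => ⟨?_, fun s => ?_⟩⟩
  · rw [hf]
    dsimp only
    rw [tsum_eq_single 0 fun n hn => by simp [hn]]
    simp [hQ0]
  · have := (hsol.hasDerivAt_tsum s).scomp s Complex.ofRealCLM.hasDerivAt
    simp only [Function.comp_def, Complex.ofRealCLM_apply, Complex.ofReal_one, one_smul] at this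
    rw [hf]
    exact this

/-- With `Q 0 = I`, `Q 1 = 𝓛_A`, `Q (n+1) = 𝓛_A ∘ Q n + n 𝓛_B ∘ Q (n-1)`
for `n ≥ 1`, and `ρ n = (1/n!) Q n (ρ₀)`, the series `∑ ρ n sⁿ` converges absolutely for
every `s : ℂ` (with respect to the Hilbert–Schmidt norm), and its sum, as a function of
real `s`, satisfies `ρ(0) = ρ₀` and the master equation `dρ/ds = 𝓛_A(ρ(s)) + s 𝓛_B(ρ(s))`. -/
theorem stmt_10 {K : ℕ} (A B L : Matrix (Fin K) (Fin K) ℂ) (T : ℝ) (hT : 0 ≤ T)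
    (ρ₀ : Matrix (Fin K) (Fin K) ℂ)
    (Q : ℕ → (Matrix (Fin K) (Fin K) ℂ →ₗ[ℂ] Matrix (Fin K) (Fin K) ℂ))
    (hQ0 : Q 0 = LinearMap.id) (hQ1 : Q 1 = lindbladA A L T)
    (hQrec : ∀ n : ℕ, 1 ≤ n →
      Q (n + 1) = (lindbladA A L T) ∘ₗ Q n + (n : ℂ) • ((lindbladB B) ∘ₗ Q (n - 1)))
    (ρ : ℕ → Matrix (Fin K) (Fin K) ℂ)
    (hρ : ∀ n : ℕ, ρ n = ((n.factorial : ℂ))⁻¹ • Q n ρ₀) :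
    (∀ s : ℂ, Summable fun n : ℕ => ‖ρ n‖ * ‖s‖ ^ n) ∧
    (∀ f : ℝ → Matrix (Fin K) (Fin K) ℂ, f = (fun s : ℝ => ∑' n : ℕ, (s : ℂ) ^ n • ρ n) →
      f 0 = ρ₀ ∧
      ∀ s : ℝ, HasDerivAt f (lindbladA A L T (f s) + (s : ℂ) • lindbladB B (f s)) s) :=
  stmt_10_general A B L T ρ₀ Q hQ0 hQ1 hQrec ρ hρ
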